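/- arXiv:2403.06564 — 2 statements merged into one kernel-verified Lean document; each statement's English description precedes it below -/
import Mathlib

section
/- Let f = (f₁, f₂) : M → ℝ² be continuous, p₁ ∈ RG_{f₁}, C = q_{f₁}⁻¹(p₁), f̃₂ = f₂|C. Identifying RG_{f̃₂} with its image under the canonical injection φ : RG_{f̃₂} → RS_f, one has the equality of sets RG_{f̃₂} = ω₁⁻¹(p₁), where ω₁ : RS_f → RG_{f₁} is the induced projection. -/
/-! Since `f₁` is constant on `C = q_{f₁}⁻¹(p₁)`, a fiber component of `f₂|C` is a connected
subset of a fiber of `f`, so `φ` is well defined; its image lies over `p₁` because every point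
of `C` does, and conversely every point of `RS_f` over `p₁` is represented by a point of `C`. -/

open Set Topology

variable {M : Type*} [TopologicalSpace M]

/-- The fiber-component equivalence relation of a map `g`: `x ~ y` iff `y` lies in the
connected component of `x` within the fiber `g ⁻¹' {g x}`. -/
def reebSetoid {T : Type*} (g : M → T) : Setoid M where
  r x y := y ∈ connectedComponentIn (g ⁻¹' {g x}) x
  iseqv := by
    constructor
    · intro x
      exact mem_connectedComponentIn rfl
    · intro x y h
      have hy : y ∈ g ⁻¹' {g x} := connectedComponentIn_subset (g ⁻¹' {g x}) x h
      have hgy : g y = g x := hy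
      have hx : x ∈ connectedComponentIn (g ⁻¹' {g x}) y := by
        rw [← connectedComponentIn_eq h]
        exact mem_connectedComponentIn rfl
      show x ∈ connectedComponentIn (g ⁻¹' {g y}) y
      rwa [hgy]
    · intro x y z hxy hyz
      have hy : y ∈ g ⁻¹' {g x} := connectedComponentIn_subset (g ⁻¹' {g x}) x hxy
      have hgy : g y = g x := hy
      show z ∈ connectedComponentIn (g ⁻¹' {g x}) x
      rw [connectedComponentIn_eq hxy]
      have : z ∈ connectedComponentIn (g ⁻¹' {g y}) y := hyz
      rwa [hgy] at this

/-- The Reeb quotient (Reeb space / Reeb graph) of a map `g`. -/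
def ReebQuot {T : Type*} (g : M → T) : Type _ := Quotient (reebSetoid g)

instance {T : Type*} (g : M → T) : TopologicalSpace (ReebQuot g) :=
  instTopologicalSpaceQuotient

/-- The quotient map onto the Reeb quotient. -/
def reebMk {T : Type*} (g : M → T) : M → ReebQuot g := Quotient.mk (reebSetoid g)

/-- Fiber components of a finer map are contained in fiber components of a coarser map. -/
theorem reeb_descend {T S : Type*} {g : M → T} {g' : M → S}
    (hg : ∀ a b, g a = g b → g' a = g' b) {x y : M}
    (h : (reebSetoid g).r x y) : (reebSetoid g').r x y := by
  have hsub : g ⁻¹' {g x} ⊆ g' ⁻¹' {g' x} := by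
    intro z hz
    simp only [mem_preimage, mem_singleton_iff] at hz ⊢
    exact hg z x hz
  exact connectedComponentIn_mono x hsub h

/-- The map `ω₁ : RS_f → RG_{f₁}` induced on Reeb quotients. -/
def omega1 (f₁ f₂ : M → ℝ) : ReebQuot (fun m => (f₁ m, f₂ m)) → ReebQuot f₁ :=
  Quotient.lift (reebMk f₁)
    (fun _ _ hab => Quot.sound (reeb_descend (fun _ _ huv => congrArg Prod.fst huv) hab))

/-- The map `ω₂ : RS_f → RG_{f₂}` induced on Reeb quotients. -/
def omega2 (f₁ f₂ : M → ℝ) : ReebQuot (fun m => (f₁ m, f₂ m)) → ReebQuot f₂ :=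
  Quotient.lift (reebMk f₂)
    (fun _ _ hab => Quot.sound (reeb_descend (fun _ _ huv => congrArg Prod.snd huv) hab))

/-- The induced map `f̄ : ReebQuot g → T` with `f̄ ∘ q_g = g`. -/
def reebLift {T : Type*} (g : M → T) : ReebQuot g → T :=
  Quotient.lift g (fun a b hab => by
    have : b ∈ g ⁻¹' {g a} := connectedComponentIn_subset (g ⁻¹' {g a}) a hab
    exact (show g b = g a from this).symm)

theorem reebSetoid_r_of_restrict {T : Type*} {g : M → T} {s : Set M} {a b : s}
    (h : (reebSetoid (fun c : s => g c.1)).r a b) : (reebSetoid g).r a.1 b.1 := by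
  have hcomp : Subtype.val '' connectedComponentIn (Subtype.val ⁻¹' (g ⁻¹' {g a.1})) a ⊆
      connectedComponentIn (Subtype.val '' (Subtype.val ⁻¹' (g ⁻¹' {g a.1}))) a.1 :=
    continuous_subtype_val.continuousOn.image_connectedComponentIn_subset rfl
  exact connectedComponentIn_mono a.1 (image_preimage_subset _ _) (hcomp ⟨b, h, rfl⟩)

theorem reebSetoid_r_of_restrict_of_eq {T S : Type*} {g : M → T} {g' : M → S} {s : Set M}
    (hs : ∀ x ∈ s, ∀ y ∈ s, g' x = g' y → g x = g y) {a b : s}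
    (h : (reebSetoid (fun c : s => g' c.1)).r a b) : (reebSetoid g).r a.1 b.1 :=
  reebSetoid_r_of_restrict <|
    reeb_descend (fun x y hxy => hs x.1 x.2 y.1 y.2 hxy) h

theorem eq_of_reebMk_eq {T : Type*} {g : M → T} {x y : M} (h : reebMk g x = reebMk g y) :
    g x = g y :=
  (connectedComponentIn_subset _ x (Quotient.exact h) : g y = g x).symm

/-- The canonical map `φ : RG_{f̃₂} → RS_f`. -/
def contourToReebSpace {T S : Type*} (f₁ : M → T) (f₂ : M → S) (p₁ : ReebQuot f₁) :
    ReebQuot (fun c : (reebMk f₁ ⁻¹' {p₁} : Set M) => f₂ c.1) →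
      ReebQuot (fun m => (f₁ m, f₂ m)) :=
  Quotient.lift (fun c => reebMk _ c.1) fun _ _ hab => Quot.sound <|
    reebSetoid_r_of_restrict_of_eq
      (fun _ hx _ hy hxy => Prod.ext (eq_of_reebMk_eq (g := f₁) (hx.trans hy.symm)) hxy) hab

theorem range_contourToReebSpace (f₁ f₂ : M → ℝ) (p₁ : ReebQuot f₁) :
    range (contourToReebSpace f₁ f₂ p₁) = omega1 f₁ f₂ ⁻¹' {p₁} := by
  ext y
  constructor
  · rintro ⟨z, rfl⟩
    induction z using Quotient.inductionOn with
    | h c => exact c.2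
  · induction y using Quotient.inductionOn with
    | h m => exact fun hm => ⟨reebMk _ ⟨m, hm⟩, rfl⟩

theorem phi_range_eq_fiber_general {M : Type*} [TopologicalSpace M] (f₁ f₂ : M → ℝ)
    (p₁ : ReebQuot f₁) :
    ∃ φ : ReebQuot (fun c : (reebMk f₁ ⁻¹' {p₁} : Set M) => f₂ c.1) → ReebQuot (fun m => (f₁ m, f₂ m)),
      (∀ c : (reebMk f₁ ⁻¹' {p₁} : Set M), φ (reebMk (fun c : (reebMk f₁ ⁻¹' {p₁} : Set M) => f₂ c.1) c) = reebMk (fun m => (f₁ m, f₂ m)) c.1) ∧ Set.range φ = omega1 f₁ f₂ ⁻¹' {p₁} :=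
  ⟨contourToReebSpace f₁ f₂ p₁, fun _ => rfl, range_contourToReebSpace f₁ f₂ p₁⟩

/-- identifying `RG_{f̃₂}` with its image under `φ`, one has
`RG_{f̃₂} = ω₁⁻¹(p₁)` as sets. -/
theorem phi_range_eq_fiber {M : Type*} [TopologicalSpace M] (f₁ f₂ : M → ℝ)
    (hf₁ : Continuous f₁) (hf₂ : Continuous f₂) (p₁ : ReebQuot f₁) :
    ∃ φ : ReebQuot (fun c : (reebMk f₁ ⁻¹' {p₁} : Set M) => f₂ c.1) → ReebQuot (fun m => (f₁ m, f₂ m)),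
      (∀ c : (reebMk f₁ ⁻¹' {p₁} : Set M), φ (reebMk (fun c : (reebMk f₁ ⁻¹' {p₁} : Set M) => f₂ c.1) c) = reebMk (fun m => (f₁ m, f₂ m)) c.1) ∧ Set.range φ = omega1 f₁ f₂ ⁻¹' {p₁} :=
  phi_range_eq_fiber_general f₁ f₂ p₁
end

section
/- Let M be a compact topological space, f = (f₁, f₂) : M → ℝ² continuous, and p₁ ∈ RG_{f₁}. Then the canonical injection φ : RG_{f̃₂} → RS_f is a closed map: for every closed subset A of RG_{f̃₂}, φ(A) is closed in RS_f. -/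
open Set Topology

variable {M : Type*} [TopologicalSpace M]

/-!
Write `C = q_{f₁}⁻¹(p₁)` and `f = (f₁, f₂)`. Since `f₁` is constant on `C`, the fibres of `f₂|_C`
are the fibres of `f|_C`, and since `C` is a union of fibre components of `f₁`, it contains every
fibre component of `f` that it meets. Hence the fibre components of `f₂|_C` are exactly the fibre
components of `f` lying in `C`, so `q_f⁻¹(φ(A)) = q_{f₂|_C}⁻¹(A)` for every `A`. When `A` is
closed, the right-hand side is closed in `C`, and `C` is closed in `M` (a fibre component of the
continuous `f₁`), so `φ(A)` is closed in the quotient `RS_f`.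
-/

section ConnectedComponentIn

variable {X : Type*} [TopologicalSpace X]

theorem IsClosed.connectedComponentIn {F : Set X} (hF : IsClosed F) (x : X) :
    IsClosed (connectedComponentIn F x) := by
  by_cases hx : x ∈ F
  · rw [connectedComponentIn_eq_image hx]
    exact hF.isClosedEmbedding_subtypeVal.isClosedMap _ isClosed_connectedComponent
  · rw [connectedComponentIn_eq_empty hx]
    exact isClosed_empty

theorem connectedComponentIn_inter_of_subset {C F : Set X} {x : X}
    (h : connectedComponentIn F x ⊆ C) :
    connectedComponentIn (C ∩ F) x = connectedComponentIn F x := by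
  refine (connectedComponentIn_mono x inter_subset_right).antisymm ?_
  by_cases hx : x ∈ F
  · exact isPreconnected_connectedComponentIn.subset_connectedComponentIn
      (mem_connectedComponentIn hx) (subset_inter h (connectedComponentIn_subset F x))
  · simp [connectedComponentIn_eq_empty hx]

theorem image_val_connectedComponentIn {C : Set X} {s : Set C} {x : C} (hx : x ∈ s) :
    (↑) '' connectedComponentIn s x = connectedComponentIn ((↑) '' s) (x : X) := by
  refine (continuous_subtype_val.continuousOn.image_connectedComponentIn_subset hx).antisymm ?_
  set K := connectedComponentIn ((↑) '' s) (x : X)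
  have hKC : K ⊆ C := (connectedComponentIn_subset _ _).trans (Subtype.coe_image_subset C s)
  have hK : (↑) '' ((↑) ⁻¹' K : Set C) = K := by rwa [Subtype.image_preimage_coe, inter_eq_right]
  have hpre : IsPreconnected ((↑) ⁻¹' K : Set C) := by
    rw [← IsInducing.subtypeVal.isPreconnected_image, hK]
    exact isPreconnected_connectedComponentIn
  have hsub : ((↑) ⁻¹' K : Set C) ⊆ s := by
    rw [← Subtype.val_injective.preimage_image s]
    exact preimage_mono (connectedComponentIn_subset _ _)
  rw [← hK]
  exact image_mono
    (hpre.subset_connectedComponentIn (mem_connectedComponentIn (mem_image_of_mem _ hx)) hsub)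

end ConnectedComponentIn

section Reeb

variable {T S : Type*}

theorem reebMk_surjective (g : M → T) : Function.Surjective (reebMk g) :=
  Quotient.mk_surjective

theorem isQuotientMap_reebMk (g : M → T) : IsQuotientMap (reebMk g) :=
  isQuotientMap_quot_mk

theorem reebMk_eq_reebMk_iff {g : M → T} {x y : M} :
    reebMk g x = reebMk g y ↔ y ∈ connectedComponentIn (g ⁻¹' {g x}) x :=
  Quotient.eq

theorem apply_eq_of_reebMk_eq {g : M → T} {x y : M} (h : reebMk g x = reebMk g y) : g x = g y :=
  congrArg (reebLift g) h

theorem isClosed_reebMk_preimage_singleton [TopologicalSpace T] [T1Space T] {g : M → T}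
    (hg : Continuous g) (p : ReebQuot g) : IsClosed (reebMk g ⁻¹' {p}) := by
  obtain ⟨x, rfl⟩ := reebMk_surjective g p
  have hfiber : reebMk g ⁻¹' {reebMk g x} = connectedComponentIn (g ⁻¹' {g x}) x := by
    ext y
    exact eq_comm.trans reebMk_eq_reebMk_iff
  rw [hfiber]
  exact (isClosed_singleton.preimage hg).connectedComponentIn x

variable {C : Set M} {g : M → T} {h : C → S} (hgh : ∀ a b : C, h a = h b ↔ g a = g b)
include hgh

theorem image_val_connectedComponentIn_fiber (a : C) :
    (↑) '' connectedComponentIn (h ⁻¹' {h a}) a = connectedComponentIn (C ∩ g ⁻¹' {g a}) a := by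
  have hfiber : h ⁻¹' {h a} = (↑) ⁻¹' (g ⁻¹' {g a}) := by
    ext b
    exact hgh b a
  rw [image_val_connectedComponentIn (mem_singleton (h a)), hfiber, Subtype.image_preimage_coe]

theorem reebMk_val_eq_of_reebMk_eq {a b : C} (hab : reebMk h a = reebMk h b) :
    reebMk g a = reebMk g b := by
  rw [reebMk_eq_reebMk_iff] at hab ⊢
  exact connectedComponentIn_mono _ inter_subset_right
    (image_val_connectedComponentIn_fiber hgh a ▸ mem_image_of_mem _ hab)

/-- The paper's `φ : RG_{f̃₂} → RS_f` is the case `g = f`, `h = f̃₂`. -/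
def reebInclusion : ReebQuot h → ReebQuot g :=
  Quotient.lift (fun c : C => reebMk g c) fun _ _ hab =>
    reebMk_val_eq_of_reebMk_eq hgh (Quotient.sound hab)

variable (hsat : ∀ x y, reebMk g x = reebMk g y → x ∈ C → y ∈ C)
include hsat

theorem exists_reebMk_eq_of_reebMk_val_eq {a : C} {y : M} (hay : reebMk g a = reebMk g y) :
    ∃ b : C, (b : M) = y ∧ reebMk h a = reebMk h b := by
  have hcomp : connectedComponentIn (g ⁻¹' {g a}) a ⊆ C := fun z hz =>
    hsat a z (reebMk_eq_reebMk_iff.2 hz) a.2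
  rw [reebMk_eq_reebMk_iff, ← connectedComponentIn_inter_of_subset hcomp,
    ← image_val_connectedComponentIn_fiber hgh] at hay
  obtain ⟨b, hb, rfl⟩ := hay
  exact ⟨b, rfl, reebMk_eq_reebMk_iff.2 hb⟩

theorem reebMk_preimage_image_reebInclusion (A : Set (ReebQuot h)) :
    reebMk g ⁻¹' (reebInclusion hgh '' A) = (↑) '' (reebMk h ⁻¹' A) := by
  ext y
  constructor
  · rintro ⟨p, hpA, hpy⟩
    obtain ⟨a, rfl⟩ := reebMk_surjective h p
    obtain ⟨b, rfl, hab⟩ := exists_reebMk_eq_of_reebMk_val_eq hgh hsat hpy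
    exact ⟨b, show reebMk h b ∈ A from hab ▸ hpA, rfl⟩
  · rintro ⟨b, hbA, rfl⟩
    exact ⟨reebMk h b, hbA, rfl⟩

theorem isClosedMap_reebInclusion (hC : IsClosed C) : IsClosedMap (reebInclusion hgh) := by
  intro A hA
  rw [← (isQuotientMap_reebMk g).isClosed_preimage, reebMk_preimage_image_reebInclusion hgh hsat]
  exact hC.isClosedEmbedding_subtypeVal.isClosedMap _
    (hA.preimage (isQuotientMap_reebMk h).continuous)

end Reeb

theorem phi_closedMap_general {M : Type*} [TopologicalSpace M] (f₁ f₂ : M → ℝ)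
    (hf₁ : Continuous f₁) (p₁ : ReebQuot f₁) :
    ∃ φ : ReebQuot (fun c : (reebMk f₁ ⁻¹' {p₁} : Set M) => f₂ c.1) → ReebQuot (fun m => (f₁ m, f₂ m)),
      (∀ c : (reebMk f₁ ⁻¹' {p₁} : Set M), φ (reebMk (fun c : (reebMk f₁ ⁻¹' {p₁} : Set M) => f₂ c.1) c) = reebMk (fun m => (f₁ m, f₂ m)) c.1) ∧ IsClosedMap φ := by
  set C : Set M := reebMk f₁ ⁻¹' {p₁}
  have hfibers : ∀ a b : C, f₂ a = f₂ b ↔ (f₁ a, f₂ a) = (f₁ b, f₂ b) := fun a b => by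
    have hf₁ab : f₁ a = f₁ b := apply_eq_of_reebMk_eq (a.2.trans b.2.symm)
    simp [hf₁ab]
  have hsat : ∀ x y, reebMk (fun m => (f₁ m, f₂ m)) x = reebMk (fun m => (f₁ m, f₂ m)) y →
      x ∈ C → y ∈ C := fun x y hxy hx =>
    (congrArg (omega1 f₁ f₂) hxy).symm.trans hx
  exact ⟨reebInclusion hfibers, fun _ => rfl,
    isClosedMap_reebInclusion hfibers hsat (isClosed_reebMk_preimage_singleton hf₁ p₁)⟩

/-- for compact `M`, the canonical injection `φ : RG_{f̃₂} → RS_f` is a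
closed map. -/
theorem phi_closedMap {M : Type*} [TopologicalSpace M] [CompactSpace M] (f₁ f₂ : M → ℝ)
    (hf₁ : Continuous f₁) (hf₂ : Continuous f₂) (p₁ : ReebQuot f₁) :
    ∃ φ : ReebQuot (fun c : (reebMk f₁ ⁻¹' {p₁} : Set M) => f₂ c.1) → ReebQuot (fun m => (f₁ m, f₂ m)),
      (∀ c : (reebMk f₁ ⁻¹' {p₁} : Set M), φ (reebMk (fun c : (reebMk f₁ ⁻¹' {p₁} : Set M) => f₂ c.1) c) = reebMk (fun m => (f₁ m, f₂ m)) c.1) ∧ IsClosedMap φ :=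
  phi_closedMap_general f₁ f₂ hf₁ p₁
end
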